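/- The σ-Gaussian smoothing of the square of ReLU is (relu²)_σ(x) = (1/4)(1 + erf(x/σ))(σ² + 2x²) + (σx/(2√π)) e^{−x²/σ²}. -/

import Mathlib

open MeasureTheory Real

noncomputable def gsmooth1 (g : ℝ → ℝ) (σ x : ℝ) : ℝ :=
  (1 / Real.sqrt Real.pi) * ∫ u : ℝ, g (x + σ * u) * Real.exp (-u ^ 2)

noncomputable def erf (z : ℝ) : ℝ :=
  2 / Real.sqrt Real.pi * ∫ t in (0 : ℝ)..z, Real.exp (-t ^ 2)

/-!
The integrand vanishes for `u ≤ -x/σ`, and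
`(x + σu)² e^{-u²} = (x² + σ²/2) e^{-u²} + d/du [-(σx + σ²u/2) e^{-u²}]`.
Integrating over `(-x/σ, ∞)`, the first term gives a Gaussian tail, which is `erf`, and the second
the boundary value `(σx/2) e^{-x²/σ²}`.
-/

open Filter Topology Set

theorem integrable_pow_mul_exp_neg_sq (n : ℕ) :
    Integrable fun u : ℝ => u ^ n * exp (-u ^ 2) := by
  simpa using integrable_rpow_mul_exp_neg_mul_sq one_pos (neg_one_lt_zero.trans_le n.cast_nonneg)

theorem tendsto_pow_mul_exp_neg_sq_atTop (n : ℕ) :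
    Tendsto (fun u : ℝ => u ^ n * exp (-u ^ 2)) atTop (𝓝 0) := by
  have hexp : Tendsto (fun u : ℝ => exp (-(1 / 2) * u)) atTop (𝓝 0) :=
    tendsto_exp_atBot.comp (tendsto_id.const_mul_atTop_of_neg (by norm_num))
  simpa using (rpow_mul_exp_neg_mul_sq_isLittleO_exp_neg one_pos n).trans_tendsto hexp

theorem integrable_add_mul_sq_mul_exp_neg_sq (x σ : ℝ) :
    Integrable fun u : ℝ => (x + σ * u) ^ 2 * exp (-u ^ 2) := by
  refine ((((integrable_pow_mul_exp_neg_sq 0).const_mul (x ^ 2)).add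
    ((integrable_pow_mul_exp_neg_sq 1).const_mul (2 * x * σ))).add
    ((integrable_pow_mul_exp_neg_sq 2).const_mul (σ ^ 2))).congr (Eventually.of_forall fun u => ?_)
  simp only [Pi.add_apply]
  ring

theorem integral_Ioi_neg_exp_neg_sq (b : ℝ) :
    ∫ u in Ioi (-b), exp (-u ^ 2) = √π / 2 * (1 + erf b) := by
  have hint : Integrable fun u : ℝ => exp (-u ^ 2) := by
    simpa using integrable_pow_mul_exp_neg_sq 0
  have hhalf : ∫ u in Ioi (0 : ℝ), exp (-u ^ 2) = √π / 2 := by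
    simpa using integral_gaussian_Ioi 1
  have hsymm : ∫ u in -b..0, exp (-u ^ 2) = ∫ u in 0..b, exp (-u ^ 2) := by
    have := (intervalIntegral.integral_comp_neg (a := 0) (b := b) fun u => exp (-u ^ 2)).symm
    simp only [neg_sq, neg_zero] at this
    exact this
  rw [← intervalIntegral.integral_interval_add_Ioi hint.integrableOn hint.integrableOn, hsymm,
    hhalf, erf]
  have : (0 : ℝ) < √π := sqrt_pos.2 pi_pos
  field_simp
  ring

theorem hasDerivAt_linear_mul_exp_neg_sq (x σ u : ℝ) :
    HasDerivAt (fun u => -(σ * x + σ ^ 2 / 2 * u) * exp (-u ^ 2))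
      (((x + σ * u) ^ 2 - (x ^ 2 + σ ^ 2 / 2)) * exp (-u ^ 2)) u :=
  ((((hasDerivAt_id' u).const_mul (σ ^ 2 / 2)).const_add (σ * x)).neg.mul
    (hasDerivAt_pow 2 u).neg.exp).congr_deriv (by simp only [Pi.neg_apply]; ring)

theorem integral_Ioi_add_mul_sq_mul_exp_neg_sq (x σ a : ℝ) :
    ∫ u in Ioi a, (x + σ * u) ^ 2 * exp (-u ^ 2) =
      (x ^ 2 + σ ^ 2 / 2) * (∫ u in Ioi a, exp (-u ^ 2)) +
        (σ * x + σ ^ 2 / 2 * a) * exp (-a ^ 2) := by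
  have hexp : Integrable fun u : ℝ => (x ^ 2 + σ ^ 2 / 2) * exp (-u ^ 2) := by
    simpa using (integrable_pow_mul_exp_neg_sq 0).const_mul (x ^ 2 + σ ^ 2 / 2)
  have hF' : Integrable fun u : ℝ => ((x + σ * u) ^ 2 - (x ^ 2 + σ ^ 2 / 2)) * exp (-u ^ 2) :=
    ((integrable_add_mul_sq_mul_exp_neg_sq x σ).sub hexp).congr
      (Eventually.of_forall fun u => by simp only [Pi.sub_apply]; ring)
  have hF : Tendsto (fun u => -(σ * x + σ ^ 2 / 2 * u) * exp (-u ^ 2)) atTop (𝓝 0) := by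
    simpa using ((tendsto_pow_mul_exp_neg_sq_atTop 0).const_mul (-(σ * x))).add
      ((tendsto_pow_mul_exp_neg_sq_atTop 1).const_mul (-(σ ^ 2 / 2))) |>.congr fun u => by ring
  have hFTC := integral_Ioi_of_hasDerivAt_of_tendsto' (a := a)
    (fun u _ => hasDerivAt_linear_mul_exp_neg_sq x σ u) hF'.integrableOn hF
  rw [← integral_const_mul, ← sub_eq_iff_eq_add', ← integral_sub
    (integrable_add_mul_sq_mul_exp_neg_sq x σ).integrableOn hexp.integrableOn]
  simp_rw [← sub_mul]
  rw [hFTC]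
  ring

theorem gsmooth1_eq_setIntegral_Ioi {g : ℝ → ℝ} (hg : ∀ y ≤ 0, g y = 0) {σ : ℝ} (hσ : 0 < σ)
    (x : ℝ) : gsmooth1 g σ x = 1 / √π * ∫ u in Ioi (-(x / σ)), g (x + σ * u) * exp (-u ^ 2) := by
  rw [gsmooth1, ← integral_indicator measurableSet_Ioi]
  congr 2 with u
  by_cases hu : u ∈ Ioi (-(x / σ))
  · rw [indicator_of_mem hu]
  · rw [indicator_of_notMem hu, hg, zero_mul]
    rw [mem_Ioi, not_lt, le_neg, div_le_iff₀ hσ] at hu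
    linarith

/-- the Gaussian smoothing of ReLU²:
`(relu²)_σ(x) = (1/4)(1 + erf(x/σ))(σ² + 2x²) + (σx/(2√π)) e^{−x²/σ²}`. -/
theorem gsmooth_relu_sq (σ : ℝ) (hσ : 0 < σ) (x : ℝ) :
    gsmooth1 (fun y => (max y 0) ^ 2) σ x =
      1 / 4 * (1 + erf (x / σ)) * (σ ^ 2 + 2 * x ^ 2) +
        σ * x / (2 * Real.sqrt Real.pi) * Real.exp (-x ^ 2 / σ ^ 2) := by
  have hrelu : ∀ u ∈ Ioi (-(x / σ)), max (x + σ * u) 0 ^ 2 * exp (-u ^ 2) =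
      (x + σ * u) ^ 2 * exp (-u ^ 2) := fun u hu => by
    rw [mem_Ioi, neg_lt, lt_div_iff₀ hσ] at hu
    rw [max_eq_left (by linarith)]
  rw [gsmooth1_eq_setIntegral_Ioi (fun y hy => by simp [max_eq_right hy]) hσ,
    setIntegral_congr_fun measurableSet_Ioi hrelu, integral_Ioi_add_mul_sq_mul_exp_neg_sq,
    integral_Ioi_neg_exp_neg_sq]
  have : (0 : ℝ) < √π := sqrt_pos.2 pi_pos
  field_simp
  ring
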